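/- Correctness of the reduction underlying the NP-hardness of constructive control on trees: in the tree reduced instance, there exists W ⊆ V \ {z*_1} such that candidate c uniquely wins the election restricted to W, if and only if there exists A ⊆ {1, …, m} with |A| = ℓ and ⋃_{i ∈ A} S_i = {1, …, 3ℓ}. -/

import Mathlib

/-- Vertices of the tree reduced instance: for each `i ∈ [m]`, the path `P^(i)` has
vertices `v i j` (`j : Fin 3`, the vertices `v^(i)_1, v^(i)_2, v^(i)_3`), `u i k`
(`k : Fin (3ℓ)`, the vertices `u^(i)_1, …, u^(i)_{3ℓ}`) and `w i`; the path `P^#` has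
vertices `zh 0, zh 1`; the path `P^*` has vertices `zs t` for `t : Fin (m + 1 - ℓ)`
(all 0-indexed). -/
inductive VT (ℓ m : ℕ) : Type
  | v (i : Fin m) (j : Fin 3) : VT ℓ m
  | u (i : Fin m) (k : Fin (3 * ℓ)) : VT ℓ m
  | w (i : Fin m) : VT ℓ m
  | zh (j : Fin 2) : VT ℓ m
  | zs (t : Fin (m + 1 - ℓ)) : VT ℓ m
  deriving DecidableEq

/-- The candidate set `C = U ∪ {c, d}`, where `U = {1, …, 3ℓ}`. -/
inductive CandT (ℓ : ℕ) : Type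
  | elem (k : Fin (3 * ℓ)) : CandT ℓ
  | c : CandT ℓ
  | d : CandT ℓ
  deriving DecidableEq

/-- Base edge relation of the tree reduced instance: consecutive vertices of each path
`P^(i) = (v^(i)_1, v^(i)_2, v^(i)_3, u^(i)_1, …, u^(i)_{3ℓ}, w^(i))`, of
`P^# = (z#_1, z#_2)` and of `P^* = (z*_1, …, z*_{m+1−ℓ})` are adjacent, and the last
vertex `z*_{m+1−ℓ}` of `P^*` is joined to each head `v^(i)_1` and to `z#_1`. -/
def baseRelT (ℓ m : ℕ) : VT ℓ m → VT ℓ m → Prop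
  | .v i j, .v i' j' => i = i' ∧ (j : ℕ) + 1 = (j' : ℕ)
  | .v i j, .u i' k => i = i' ∧ (j : ℕ) = 2 ∧ (k : ℕ) = 0
  | .u i k, .u i' k' => i = i' ∧ (k : ℕ) + 1 = (k' : ℕ)
  | .u i k, .w i' => i = i' ∧ (k : ℕ) + 1 = 3 * ℓ
  | .zh j, .zh j' => (j : ℕ) + 1 = (j' : ℕ)
  | .zs t, .zs t' => (t : ℕ) + 1 = (t' : ℕ)
  | .zs t, .v _ j => (t : ℕ) + 1 = m + 1 - ℓ ∧ (j : ℕ) = 0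
  | .zs t, .zh j => (t : ℕ) + 1 = m + 1 - ℓ ∧ (j : ℕ) = 0
  | _, _ => False

/-- The tree of the tree reduced instance. -/
def GT (ℓ m : ℕ) : SimpleGraph (VT ℓ m) := SimpleGraph.fromRel (baseRelT ℓ m)

/-- The voting function, given an enumeration `e i 0, e i 1, e i 2` of the elements of
each set `S_i`: `v^(i)_j` votes for `e^(i)_j`, `u^(i)_k` votes for `k`, the `w^(i)` and
`z#`'s vote for `c`, and the `z*`'s vote for `d`. -/
def τT (ℓ m : ℕ) (e : Fin m → Fin 3 → Fin (3 * ℓ)) : VT ℓ m → CandT ℓ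
  | .v i j => CandT.elem (e i j)
  | .u _ k => CandT.elem k
  | .w _ => CandT.c
  | .zh _ => CandT.c
  | .zs _ => CandT.d

/-- The set `S_i`, recovered from the enumeration of its elements. -/
def SetT (ℓ m : ℕ) (e : Fin m → Fin 3 → Fin (3 * ℓ)) (i : Fin m) :
    Finset (Fin (3 * ℓ)) :=
  Finset.image (e i) Finset.univ

/-- The distinguished vertex `x = z*_1`. -/
def xT (ℓ m : ℕ) (h : 0 < m + 1 - ℓ) : VT ℓ m := VT.zs ⟨0, h⟩

/-- `HW G W x`: the set of vertices reachable from `x` in the subgraph of `G` induced on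
the complement of `W` (each step of a connecting walk must avoid `W`). -/
def HW {V : Type*} (G : SimpleGraph V) (W : Set V) (x : V) : Set V :=
  {z | Relation.ReflTransGen (fun a b => G.Adj a b ∧ a ∉ W ∧ b ∉ W) x z}

/-- Candidate `c` uniquely wins the election restricted to `W`: every other candidate
gets strictly fewer votes among the voters of `H_W`. -/
def winsT (ℓ m : ℕ) (e : Fin m → Fin 3 → Fin (3 * ℓ)) (x : VT ℓ m)
    (W : Set (VT ℓ m)) : Prop :=
  ∀ y : CandT ℓ, y ≠ CandT.c →
    (HW (GT ℓ m) W x ∩ τT ℓ m e ⁻¹' {y}).ncard <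
      (HW (GT ℓ m) W x ∩ τT ℓ m e ⁻¹' {CandT.c}).ncard

namespace TreeRed

variable {ℓ m : ℕ}

def reach (ℓ m : ℕ) (W : Set (VT ℓ m)) : Set (VT ℓ m) :=
  {z | match z with
   | .zs t => ∀ t' : Fin (m + 1 - ℓ), (t' : ℕ) ≤ (t : ℕ) → VT.zs t' ∉ W
   | .zh j => (∀ t, VT.zs t ∉ W) ∧ ∀ j' : Fin 2, (j' : ℕ) ≤ (j : ℕ) → VT.zh j' ∉ W
   | .v i j => (∀ t, VT.zs t ∉ W) ∧ ∀ j' : Fin 3, (j' : ℕ) ≤ (j : ℕ) → VT.v i j' ∉ W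
   | .u i k => (∀ t, VT.zs t ∉ W) ∧ (∀ j, VT.v i j ∉ W) ∧
       ∀ k' : Fin (3 * ℓ), (k' : ℕ) ≤ (k : ℕ) → VT.u i k' ∉ W
   | .w i => (∀ t, VT.zs t ∉ W) ∧ (∀ j, VT.v i j ∉ W) ∧ (∀ k, VT.u i k ∉ W) ∧
       VT.w i ∉ W}

lemma reach_closed (W : Set (VT ℓ m)) (a b : VT ℓ m)
    (ha : a ∈ reach ℓ m W)
    (hrel : baseRelT ℓ m a b ∨ baseRelT ℓ m b a)
    (hbW : b ∉ W) : b ∈ reach ℓ m W := by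
  cases a <;> cases b <;>
    simp only [baseRelT, or_self, or_false, false_or] at hrel <;>
    simp only [reach, Set.mem_setOf_eq] at ha ⊢
  case v.v i j i' j' =>
    rcases hrel with ⟨rfl, h⟩ | ⟨rfl, h⟩
    · refine ⟨ha.1, fun j'' hj'' => ?_⟩
      by_cases h1 : (j'' : ℕ) ≤ (j : ℕ)
      · exact ha.2 j'' h1
      · rwa [show j'' = j' from Fin.ext (by omega)]
    · exact ⟨ha.1, fun j'' hj'' => ha.2 j'' (by omega)⟩
  case v.u i j i' k =>
    obtain ⟨rfl, hj, hk⟩ := hrel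
    refine ⟨ha.1, fun j'' => ha.2 j'' (by omega), fun k'' hk'' => ?_⟩
    rwa [show k'' = k from Fin.ext (by omega)]
  case v.zs i j t =>
    obtain ⟨ht, hj⟩ := hrel
    exact fun t' _ => ha.1 t'
  case u.v i k i' j =>
    obtain ⟨rfl, hj, hk⟩ := hrel
    exact ⟨ha.1, fun j'' _ => ha.2.1 j''⟩
  case u.u i k i' k' =>
    rcases hrel with ⟨rfl, h⟩ | ⟨rfl, h⟩
    · refine ⟨ha.1, ha.2.1, fun k'' hk'' => ?_⟩
      by_cases h1 : (k'' : ℕ) ≤ (k : ℕ)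
      · exact ha.2.2 k'' h1
      · rwa [show k'' = k' from Fin.ext (by omega)]
    · exact ⟨ha.1, ha.2.1, fun k'' hk'' => ha.2.2 k'' (by omega)⟩
  case u.w i k i' =>
    obtain ⟨rfl, hk⟩ := hrel
    exact ⟨ha.1, ha.2.1, fun k'' => ha.2.2 k'' (by omega), hbW⟩
  case w.u i i' k =>
    obtain ⟨rfl, hk⟩ := hrel
    exact ⟨ha.1, ha.2.1, fun k'' _ => ha.2.2.1 k''⟩
  case zh.zh j j' =>
    rcases hrel with h | h
    · refine ⟨ha.1, fun j'' hj'' => ?_⟩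
      by_cases h1 : (j'' : ℕ) ≤ (j : ℕ)
      · exact ha.2 j'' h1
      · rwa [show j'' = j' from Fin.ext (by omega)]
    · exact ⟨ha.1, fun j'' hj'' => ha.2 j'' (by omega)⟩
  case zh.zs j t =>
    obtain ⟨ht, hj⟩ := hrel
    exact fun t' _ => ha.1 t'
  case zs.v t i j =>
    obtain ⟨ht, hj⟩ := hrel
    refine ⟨fun t' => ha t' (by omega), fun j'' hj'' => ?_⟩
    rwa [show j'' = j from Fin.ext (by omega)]
  case zs.zh t j =>
    obtain ⟨ht, hj⟩ := hrel
    refine ⟨fun t' => ha t' (by omega), fun j'' hj'' => ?_⟩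
    rwa [show j'' = j from Fin.ext (by omega)]
  case zs.zs t t' =>
    rcases hrel with h | h
    · intro t'' ht''
      by_cases h1 : (t'' : ℕ) ≤ (t : ℕ)
      · exact ha t'' h1
      · rwa [show t'' = t' from Fin.ext (by omega)]
    · exact fun t'' ht'' => ha t'' (by omega)

lemma hw_tail {V : Type*} {G : SimpleGraph V} {W : Set V} {x a b : V}
    (ha : a ∈ HW G W x) (h : G.Adj a b) (haW : a ∉ W) (hbW : b ∉ W) :
    b ∈ HW G W x := Relation.ReflTransGen.tail ha ⟨h, haW, hbW⟩

lemma adj_of_rel {a b : VT ℓ m} (hne : a ≠ b) (h : baseRelT ℓ m a b) :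
    (GT ℓ m).Adj a b := (SimpleGraph.fromRel_adj _ _ _).2 ⟨hne, Or.inl h⟩

variable (hm : ℓ ≤ m) (W : Set (VT ℓ m))

local notation "X" => xT ℓ m (Nat.sub_pos_of_lt (Nat.lt_succ_of_le hm))

lemma zs_mem (t : Fin (m + 1 - ℓ))
    (h : ∀ t' : Fin (m + 1 - ℓ), (t' : ℕ) ≤ (t : ℕ) → VT.zs t' ∉ W) :
    VT.zs t ∈ HW (GT ℓ m) W X := by
  obtain ⟨n, hn⟩ : ∃ n, (t : ℕ) = n := ⟨t, rfl⟩
  induction n generalizing t with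
  | zero =>
    have : t = ⟨0, by omega⟩ := Fin.ext (by simp only [Fin.val_mk]; omega)
    rw [this]; exact Relation.ReflTransGen.refl
  | succ n ih =>
    have hlt : n < m + 1 - ℓ := by omega
    have hprev := ih ⟨n, hlt⟩ (fun t' ht' => h t' (by simp at ht' ⊢; omega)) rfl
    refine hw_tail hprev (adj_of_rel ?_ ?_) (h ⟨n, hlt⟩ (by simp; omega)) (h t le_rfl)
    · intro hc; injection hc with hc'; have := congrArg Fin.val hc'; simp at this; omega
    · show (n : ℕ) + 1 = (t : ℕ); omega

lemma hub_mem (hP0 : ∀ t, VT.zs t ∉ W) :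
    VT.zs ⟨m - ℓ, by omega⟩ ∈ HW (GT ℓ m) W X :=
  zs_mem hm W _ (fun t' _ => hP0 t')

lemma zh_mem (j : Fin 2) (hP0 : ∀ t, VT.zs t ∉ W)
    (h : ∀ j' : Fin 2, (j' : ℕ) ≤ (j : ℕ) → VT.zh j' ∉ W) :
    VT.zh j ∈ HW (GT ℓ m) W X := by
  have h0 : (VT.zh ⟨0, by omega⟩ : VT ℓ m) ∈ HW (GT ℓ m) W X := by
    refine hw_tail (hub_mem hm W hP0) (adj_of_rel (by simp) ?_) (hP0 _) (h _ (by simp))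
    exact ⟨by simp; omega, rfl⟩
  rcases j with ⟨jv, hj⟩
  interval_cases jv
  · exact h0
  · refine hw_tail h0 (adj_of_rel ?_ rfl) (h _ (by simp)) (h _ le_rfl)
    intro hc; injection hc with hc'; exact absurd (congrArg Fin.val hc') (by simp)

lemma v_mem (i : Fin m) (j : Fin 3) (hP0 : ∀ t, VT.zs t ∉ W)
    (h : ∀ j' : Fin 3, (j' : ℕ) ≤ (j : ℕ) → VT.v i j' ∉ W) :
    VT.v i j ∈ HW (GT ℓ m) W X := by
  have h0 : (VT.v i ⟨0, by omega⟩ : VT ℓ m) ∈ HW (GT ℓ m) W X := by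
    refine hw_tail (hub_mem hm W hP0) (adj_of_rel (by simp) ?_) (hP0 _) (h _ (by simp))
    exact ⟨by simp; omega, rfl⟩
  have step : ∀ (j₁ j₂ : Fin 3), (j₁ : ℕ) + 1 = (j₂ : ℕ) → (j₂ : ℕ) ≤ (j : ℕ) →
      VT.v i j₁ ∈ HW (GT ℓ m) W X → VT.v i j₂ ∈ HW (GT ℓ m) W X := by
    intro j₁ j₂ h12 hle hmem
    refine hw_tail hmem (adj_of_rel ?_ ⟨rfl, h12⟩) (h _ (by omega)) (h _ hle)
    intro hc; injection hc with hc1 hc2; have := congrArg Fin.val hc2; omega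
  rcases j with ⟨jv, hj⟩
  interval_cases jv
  · exact h0
  · exact step ⟨0, by omega⟩ _ rfl le_rfl h0
  · exact step ⟨1, by omega⟩ _ rfl le_rfl (step ⟨0, by omega⟩ _ rfl (by simp) h0)

lemma u_mem (i : Fin m) (k : Fin (3 * ℓ)) (hP0 : ∀ t, VT.zs t ∉ W)
    (hv : ∀ j, VT.v i j ∉ W)
    (h : ∀ k' : Fin (3 * ℓ), (k' : ℕ) ≤ (k : ℕ) → VT.u i k' ∉ W) :
    VT.u i k ∈ HW (GT ℓ m) W X := by
  have hk0 : 0 < 3 * ℓ := by have := k.isLt; omega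
  have h0 : (VT.u i ⟨0, hk0⟩ : VT ℓ m) ∈ HW (GT ℓ m) W X := by
    refine hw_tail (v_mem hm W i ⟨2, by omega⟩ hP0 (fun j' _ => hv j'))
      (adj_of_rel (by simp) ⟨rfl, by simp⟩) (hv _) (h _ (by simp))
  obtain ⟨n, hn⟩ : ∃ n, (k : ℕ) = n := ⟨k, rfl⟩
  induction n generalizing k with
  | zero =>
    have : k = ⟨0, hk0⟩ := Fin.ext (by simp only [Fin.val_mk]; omega)
    rw [this]; exact h0
  | succ n ih =>
    have hlt : n < 3 * ℓ := by omega
    have hprev := ih ⟨n, hlt⟩ (fun k' hk' => h k' (by simp at hk' ⊢; omega)) rfl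
    refine hw_tail hprev (adj_of_rel ?_ ⟨rfl, ?_⟩) (h ⟨n, hlt⟩ (by simp; omega)) (h k le_rfl)
    · intro hc; injection hc with hc1 hc2; have := congrArg Fin.val hc2; simp at this; omega
    · show (n : ℕ) + 1 = (k : ℕ); omega

lemma w_mem (hℓ : 1 ≤ ℓ) (i : Fin m) (hP0 : ∀ t, VT.zs t ∉ W)
    (hv : ∀ j, VT.v i j ∉ W) (hu : ∀ k, VT.u i k ∉ W) (hw : VT.w i ∉ W) :
    VT.w i ∈ HW (GT ℓ m) W X := by
  have hk0 : 3 * ℓ - 1 < 3 * ℓ := by omega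
  refine hw_tail (u_mem hm W i ⟨3 * ℓ - 1, hk0⟩ hP0 hv (fun k' _ => hu k'))
    (adj_of_rel (by simp) ⟨rfl, ?_⟩) (hu _) hw
  show (3 * ℓ - 1) + 1 = 3 * ℓ; omega

/-- The key characterization of the reachable set. -/
lemma HW_eq (hx : (VT.zs ⟨0, Nat.sub_pos_of_lt (Nat.lt_succ_of_le hm)⟩ : VT ℓ m) ∉ W) (hℓ : 1 ≤ ℓ) :
    HW (GT ℓ m) W X = reach ℓ m W := by
  ext z
  constructor
  · intro hz
    induction hz with
    | refl =>
      intro t' ht'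
      simp only [Fin.val_mk] at ht'
      rwa [show t' = ⟨0, by omega⟩ from Fin.ext (by simp only [Fin.val_mk]; omega)]
    | tail _ hstep ih =>
      obtain ⟨hadj, haW, hbW⟩ := hstep
      obtain ⟨-, hrel⟩ := (SimpleGraph.fromRel_adj _ _ _).1 hadj
      exact reach_closed W _ _ ih hrel hbW
  · intro hz
    cases z with
    | v i j =>
      obtain ⟨h1, h2⟩ := hz
      exact v_mem hm W i j h1 h2
    | u i k =>
      obtain ⟨h1, h2, h3⟩ := hz
      exact u_mem hm W i k h1 h2 h3
    | w i =>
      obtain ⟨h1, h2, h3, h4⟩ := hz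
      exact w_mem hm W hℓ i h1 h2 h3 h4
    | zh j =>
      obtain ⟨h1, h2⟩ := hz
      exact zh_mem hm W j h1 h2
    | zs t =>
      exact zs_mem hm W t hz

instance : Fintype (VT ℓ m) := derive_fintype% _

lemma zh_inj : Function.Injective (VT.zh : Fin 2 → VT ℓ m) := by
  intro a b h; injection h

lemma zs_inj : Function.Injective (VT.zs : Fin (m + 1 - ℓ) → VT ℓ m) := by
  intro a b h; injection h

lemma w_inj : Function.Injective (VT.w : Fin m → VT ℓ m) := by
  intro a b h; injection h

lemma u_inj (k : Fin (3 * ℓ)) : Function.Injective (fun i => (VT.u i k : VT ℓ m)) := by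
  intro a b h; injection h

lemma ncard_range_zh : (Set.range (VT.zh : Fin 2 → VT ℓ m)).ncard = 2 := by
  rw [← Nat.card_coe_set_eq, Nat.card_range_of_injective zh_inj,
    Nat.card_eq_fintype_card, Fintype.card_fin]

lemma ncard_range_zs : (Set.range (VT.zs : Fin (m + 1 - ℓ) → VT ℓ m)).ncard = m + 1 - ℓ := by
  rw [← Nat.card_coe_set_eq, Nat.card_range_of_injective zs_inj,
    Nat.card_eq_fintype_card, Fintype.card_fin]

lemma mem_SetT {e : Fin m → Fin 3 → Fin (3 * ℓ)} {i : Fin m} {k : Fin (3 * ℓ)} :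
    k ∈ SetT ℓ m e i ↔ ∃ j, e i j = k := by
  simp [SetT]

/-- From an `A`-cover and the exactly-two property: at most one set outside `A`
contains `k`. -/
lemma outside_unique {e : Fin m → Fin 3 → Fin (3 * ℓ)} {A : Finset (Fin m)}
    (hAcov : A.biUnion (SetT ℓ m e) = Finset.univ)
    (htwo : ∀ k : Fin (3 * ℓ),
      (Finset.univ.filter fun i => k ∈ SetT ℓ m e i).card = 2)
    (k : Fin (3 * ℓ)) {i i' : Fin m} (hi : i ∉ A) (hi' : i' ∉ A)
    (hki : k ∈ SetT ℓ m e i) (hki' : k ∈ SetT ℓ m e i') : i = i' := by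
  classical
  obtain ⟨a, haA, hka⟩ := Finset.mem_biUnion.1 (hAcov ▸ Finset.mem_univ k)
  by_contra hne
  have hai : a ≠ i := fun h => hi (h ▸ haA)
  have hai' : a ≠ i' := fun h => hi' (h ▸ haA)
  have hsub : ({a, i, i'} : Finset (Fin m)) ⊆
      Finset.univ.filter fun i => k ∈ SetT ℓ m e i := by
    intro x hx
    simp only [Finset.mem_insert, Finset.mem_singleton] at hx
    rcases hx with rfl | rfl | rfl <;> simp [hka, hki, hki']
  have hcard : ({a, i, i'} : Finset (Fin m)).card = 3 := by
    rw [Finset.card_insert_of_notMem (by simp [hai, hai']),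
      Finset.card_insert_of_notMem (by simp [hne]), Finset.card_singleton]
  have := Finset.card_le_card hsub
  rw [hcard, htwo k] at this
  omega

end TreeRed

open TreeRed in
/-- Correctness of the reduction on trees: some deletion set `W ⊆ V \ {z*_1}` makes
candidate `c` uniquely win iff there is an exact cover `A ⊆ [m]` with `|A| = ℓ` and
`⋃_{i ∈ A} S_i = {1, …, 3ℓ}`. -/
theorem tree_reduction_correct (ℓ m : ℕ) (hℓ : 1 ≤ ℓ) (hm : ℓ ≤ m)
    (e : Fin m → Fin 3 → Fin (3 * ℓ))
    (hinj : ∀ i, Function.Injective (e i))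
    (hcov : Finset.univ.biUnion (SetT ℓ m e) = Finset.univ)
    (htwo : ∀ k : Fin (3 * ℓ),
      (Finset.univ.filter fun i => k ∈ SetT ℓ m e i).card = 2) :
    (∃ W : Set (VT ℓ m), xT ℓ m (by omega) ∉ W ∧
      winsT ℓ m e (xT ℓ m (by omega)) W) ↔
    (∃ A : Finset (Fin m), A.card = ℓ ∧ A.biUnion (SetT ℓ m e) = Finset.univ) := by
  classical
  constructor
  · rintro ⟨W, hxW, hwin⟩
    have hx0 : (VT.zs ⟨0, by omega⟩ : VT ℓ m) ∉ W := hxW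
    -- Step 1: no `zs` vertex is deleted, else `c` gets no votes at all
    have hP0 : ∀ t : Fin (m + 1 - ℓ), VT.zs t ∉ W := by
      by_contra hcon
      push_neg at hcon
      obtain ⟨t0, ht0⟩ := hcon
      have hempty : HW (GT ℓ m) W (xT ℓ m (by omega)) ∩ τT ℓ m e ⁻¹' {CandT.c} = ∅ := by
        rw [HW_eq hm W hx0 hℓ]
        ext z
        simp only [Set.mem_inter_iff, Set.mem_preimage, Set.mem_singleton_iff,
          Set.mem_empty_iff_false, iff_false, not_and]
        intro hreach
        cases z with
        | v i j => simp [τT]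
        | u i k => simp [τT]
        | zs t => simp [τT]
        | w i => exact absurd ht0 (hreach.1 t0)
        | zh j => exact absurd ht0 (hreach.1 t0)
      have := hwin CandT.d (fun h => nomatch h)
      rw [hempty, Set.ncard_empty] at this
      omega
    have hHW : HW (GT ℓ m) W (xT ℓ m (by omega)) = reach ℓ m W :=
      HW_eq hm W hx0 hℓ
    -- the fully surviving paths
    set F : Set (Fin m) :=
      {i | (∀ j, VT.v i j ∉ W) ∧ (∀ k, VT.u i k ∉ W) ∧ VT.w i ∉ W} with hF
    set Ff : Finset (Fin m) := Finset.univ.filter (· ∈ F) with hFf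
    have hFcoe : (Ff : Set (Fin m)) = F := by ext i; simp [hFf]
    have hiF : ∀ i, i ∈ Ff → i ∈ F := fun i hi => by simpa [hFf] using hi
    -- upper bound on the votes for `c`
    have hcsub : HW (GT ℓ m) W (xT ℓ m (by omega)) ∩ τT ℓ m e ⁻¹' {CandT.c} ⊆
        Set.range (VT.zh : Fin 2 → VT ℓ m) ∪ VT.w '' F := by
      rw [hHW]
      rintro z ⟨hreach, hτ⟩
      simp only [Set.mem_preimage, Set.mem_singleton_iff] at hτ
      cases z with
      | v i j => exact absurd hτ (by simp [τT])
      | u i k => exact absurd hτ (by simp [τT])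
      | zs t => exact absurd hτ (by simp [τT])
      | w i => exact Or.inr ⟨i, ⟨hreach.2.1, hreach.2.2.1, hreach.2.2.2⟩, rfl⟩
      | zh j => exact Or.inl ⟨j, rfl⟩
    have hcUB : (HW (GT ℓ m) W (xT ℓ m (by omega)) ∩ τT ℓ m e ⁻¹' {CandT.c}).ncard ≤
        2 + Ff.card := by
      have h1 := Set.ncard_le_ncard hcsub (Set.toFinite _)
      have h2 := Set.ncard_union_le (Set.range (VT.zh : Fin 2 → VT ℓ m)) (VT.w '' F)
      have h3 : ((VT.w '' F : Set (VT ℓ m))).ncard = Ff.card := by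
        rw [Set.ncard_image_of_injective _ w_inj, ← hFcoe, Set.ncard_coe_finset]
      rw [ncard_range_zh, h3] at h2
      omega
    -- lower bound on the votes for `d`
    have hdsub : Set.range (VT.zs : Fin (m + 1 - ℓ) → VT ℓ m) ⊆
        HW (GT ℓ m) W (xT ℓ m (by omega)) ∩ τT ℓ m e ⁻¹' {CandT.d} := by
      rintro z ⟨t, rfl⟩
      refine ⟨by rw [hHW]; exact fun t' _ => hP0 t', rfl⟩
    have hdLB : m + 1 - ℓ ≤
        (HW (GT ℓ m) W (xT ℓ m (by omega)) ∩ τT ℓ m e ⁻¹' {CandT.d}).ncard := by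
      have := Set.ncard_le_ncard hdsub (Set.toFinite _)
      rwa [ncard_range_zs] at this
    -- hence at least `m - ℓ` paths survive in full
    have hFF : m - ℓ ≤ Ff.card := by
      have := hwin CandT.d (fun h => nomatch h)
      omega
    -- at most one surviving path per element `k`
    have hk1 : ∀ k, (Ff.filter fun i => k ∈ SetT ℓ m e i).card ≤ 1 := by
      intro k
      by_contra hgt
      push_neg at hgt
      obtain ⟨i₁, hi₁, i₂, hi₂, hne⟩ := Finset.one_lt_card.1 hgt
      simp only [Finset.mem_filter] at hi₁ hi₂
      obtain ⟨j₁, hj₁⟩ := mem_SetT.1 hi₁.2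
      obtain ⟨j₂, hj₂⟩ := mem_SetT.1 hi₂.2
      set Sk : Set (VT ℓ m) :=
        insert (VT.v i₁ j₁) (insert (VT.v i₂ j₂) ((fun i => VT.u i k) '' F)) with hSk
      have hSksub : Sk ⊆
          HW (GT ℓ m) W (xT ℓ m (by omega)) ∩ τT ℓ m e ⁻¹' {CandT.elem k} := by
        rw [hHW]
        rintro z (rfl | rfl | ⟨i, hiF', rfl⟩)
        · exact ⟨⟨hP0, fun j' _ => (hiF _ hi₁.1).1 j'⟩,
            by simp [τT, hj₁]⟩
        · exact ⟨⟨hP0, fun j' _ => (hiF _ hi₂.1).1 j'⟩,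
            by simp [τT, hj₂]⟩
        · exact ⟨⟨hP0, hiF'.1, fun k' _ => hiF'.2.1 k'⟩, rfl⟩
      have hSkcard : Sk.ncard = 2 + Ff.card := by
        rw [hSk, Set.ncard_insert_of_notMem ?h1 (Set.toFinite _),
          Set.ncard_insert_of_notMem ?h2 (Set.toFinite _),
          Set.ncard_image_of_injective _ (u_inj k), ← hFcoe, Set.ncard_coe_finset]
        · omega
        case h1 =>
          rintro (hEq | ⟨i, -, hEq⟩)
          · injection hEq with h1 h2; exact hne h1
          · exact nomatch hEq
        case h2 =>
          rintro ⟨i, -, hEq⟩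
          exact nomatch hEq
      have hge := Set.ncard_le_ncard hSksub (Set.toFinite _)
      have := hwin (CandT.elem k) (fun h => nomatch h)
      omega
    -- every element is covered by a non-surviving path
    have hout : ∀ k, ∃ i, i ∉ Ff ∧ k ∈ SetT ℓ m e i := by
      intro k
      by_contra hcon
      push_neg at hcon
      have hsub : (Finset.univ.filter fun i => k ∈ SetT ℓ m e i) ⊆
          Ff.filter fun i => k ∈ SetT ℓ m e i := by
        intro i hi
        simp only [Finset.mem_filter, Finset.mem_univ, true_and] at hi ⊢
        exact ⟨by_contra fun h => (hcon i h) hi, hi⟩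
      have h1 := Finset.card_le_card hsub
      rw [htwo k] at h1
      have := hk1 k
      omega
    -- assemble the exact cover
    have hA0card : (Ffᶜ : Finset (Fin m)).card ≤ ℓ := by
      rw [Finset.card_compl, Fintype.card_fin]
      omega
    obtain ⟨A, hsubA, hAcard⟩ := Finset.exists_superset_card_eq hA0card
      (by rw [Fintype.card_fin]; exact hm)
    refine ⟨A, hAcard, Finset.eq_univ_iff_forall.2 fun k => ?_⟩
    obtain ⟨i, hiFf, hki⟩ := hout k
    exact Finset.mem_biUnion.2 ⟨i, hsubA (Finset.mem_compl.2 hiFf), hki⟩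
  · rintro ⟨A, hAcard, hAcov⟩
    set W : Set (VT ℓ m) := {z | ∃ i ∈ A, z = VT.v i 0} with hWdef
    have hWv : ∀ (i : Fin m) (j : Fin 3), VT.v i j ∈ W ↔ i ∈ A ∧ j = 0 := by
      intro i j
      constructor
      · rintro ⟨i', hi', hEq⟩
        injection hEq with h1 h2
        exact ⟨h1 ▸ hi', h2⟩
      · rintro ⟨hi, rfl⟩
        exact ⟨i, hi, rfl⟩
    have hWu : ∀ (i : Fin m) (k : Fin (3 * ℓ)), VT.u i k ∉ W := by
      rintro i k ⟨i', -, hEq⟩; exact nomatch hEq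
    have hWw : ∀ i : Fin m, VT.w i ∉ W := by
      rintro i ⟨i', -, hEq⟩; exact nomatch hEq
    have hWzh : ∀ j : Fin 2, VT.zh j ∉ W := by
      rintro j ⟨i', -, hEq⟩; exact nomatch hEq
    have hWzs : ∀ t : Fin (m + 1 - ℓ), VT.zs t ∉ W := by
      rintro t ⟨i', -, hEq⟩; exact nomatch hEq
    refine ⟨W, hWzs _, ?_⟩
    intro y hy
    have hHW : HW (GT ℓ m) W (xT ℓ m (by omega)) = reach ℓ m W :=
      HW_eq hm W (hWzs _) hℓ
    rw [hHW]
    -- the voters for `c`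
    have hcset : reach ℓ m W ∩ τT ℓ m e ⁻¹' {CandT.c} =
        Set.range (VT.zh : Fin 2 → VT ℓ m) ∪ VT.w '' {i | i ∉ A} := by
      ext z
      cases z with
      | v i j => simp [reach, τT]
      | u i k => simp [reach, τT]
      | w i =>
        simp only [Set.mem_inter_iff, Set.mem_setOf_eq, reach, Set.mem_preimage,
          Set.mem_singleton_iff, τT, Set.mem_union, Set.mem_range, Set.mem_image]
        constructor
        · rintro ⟨⟨-, hv, -, -⟩, -⟩
          refine Or.inr ⟨i, fun hiA => ?_, rfl⟩
          exact hv 0 ((hWv i 0).2 ⟨hiA, rfl⟩)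
        · rintro (⟨j, hEq⟩ | ⟨i', hi', hEq⟩)
          · exact nomatch hEq
          · injection hEq with h1
            subst h1
            exact ⟨⟨hWzs, fun j hmem => hi' ((hWv _ j).1 hmem).1,
              fun k => hWu _ k, hWw _⟩, trivial⟩
      | zh j =>
        simp only [Set.mem_inter_iff, Set.mem_setOf_eq, reach, Set.mem_preimage,
          Set.mem_singleton_iff, τT, Set.mem_union, Set.mem_range, Set.mem_image]
        constructor
        · rintro -
          exact Or.inl ⟨j, rfl⟩
        · rintro -
          exact ⟨⟨hWzs, fun j' _ => hWzh j'⟩, trivial⟩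
      | zs t => simp [reach, τT]
    have hccard : (reach ℓ m W ∩ τT ℓ m e ⁻¹' {CandT.c}).ncard = 2 + (m - ℓ) := by
      rw [hcset, Set.ncard_union_eq ?disj (Set.toFinite _) (Set.toFinite _),
        ncard_range_zh, Set.ncard_image_of_injective _ w_inj]
      case disj =>
        rw [Set.disjoint_left]
        rintro z ⟨j, rfl⟩ ⟨i, -, hEq⟩
        exact nomatch hEq
      congr 1
      rw [show {i | i ∉ A} = ((Aᶜ : Finset (Fin m)) : Set (Fin m)) by ext i; simp,
        Set.ncard_coe_finset, Finset.card_compl, hAcard, Fintype.card_fin]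
    rw [hccard]
    cases y with
    | c => exact absurd rfl hy
    | d =>
      have hdsub : reach ℓ m W ∩ τT ℓ m e ⁻¹' {CandT.d} ⊆
          Set.range (VT.zs : Fin (m + 1 - ℓ) → VT ℓ m) := by
        rintro z ⟨-, hz⟩
        cases z <;> simp_all [τT]
      have := (Set.ncard_le_ncard hdsub (Set.toFinite _)).trans_eq ncard_range_zs
      omega
    | elem k =>
      set Tk : Set (VT ℓ m) := {z | ∃ i, i ∉ A ∧ ∃ j, e i j = k ∧ z = VT.v i j} with hTk
      have hksub : reach ℓ m W ∩ τT ℓ m e ⁻¹' {CandT.elem k} ⊆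
          ((fun i => VT.u i k) '' {i | i ∉ A}) ∪ Tk := by
        rintro z ⟨hreach, hτ⟩
        simp only [Set.mem_preimage, Set.mem_singleton_iff] at hτ
        cases z with
        | v i j =>
          simp only [τT] at hτ
          injection hτ with hτ
          obtain ⟨-, hv⟩ := hreach
          refine Or.inr ⟨i, fun hiA => ?_, j, hτ, rfl⟩
          exact hv ⟨0, by omega⟩ (by simp) ((hWv i _).2 ⟨hiA, Fin.ext (by simp)⟩)
        | u i k' =>
          simp only [τT] at hτ
          injection hτ with hτ
          obtain ⟨-, hv, -⟩ := hreach
          subst hτ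
          exact Or.inl ⟨i, fun hiA => hv 0 ((hWv i 0).2 ⟨hiA, rfl⟩), rfl⟩
        | w i => exact absurd hτ (by simp [τT])
        | zh j => exact absurd hτ (by simp [τT])
        | zs t => exact absurd hτ (by simp [τT])
      have hk1 : ((fun i => VT.u i k) '' {i | i ∉ A}).ncard = m - ℓ := by
        rw [Set.ncard_image_of_injective _ (u_inj k),
          show {i | i ∉ A} = ((Aᶜ : Finset (Fin m)) : Set (Fin m)) by ext i; simp,
          Set.ncard_coe_finset, Finset.card_compl, hAcard, Fintype.card_fin]
      have hk2 : Tk.ncard ≤ 1 := by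
        rw [Set.ncard_le_one (Set.toFinite _)]
        rintro a ⟨i, hiA, j, hij, rfl⟩ b ⟨i', hiA', j', hij', rfl⟩
        have hii : i = i' :=
          outside_unique hAcov htwo k hiA hiA'
            (mem_SetT.2 ⟨j, hij⟩) (mem_SetT.2 ⟨j', hij'⟩)
        subst hii
        have : j = j' := hinj i (hij.trans hij'.symm)
        rw [this]
      have hle := Set.ncard_le_ncard hksub (Set.toFinite _)
      have := Set.ncard_union_le ((fun i => VT.u i k) '' {i | i ∉ A}) Tk
      omega
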